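/- arXiv:1305.0799 — 4 statements merged into one kernel-verified Lean document; each statement's English description precedes it below -/
import Mathlib

section
/- If L is a positive linear functional on R^{ℓ×ℓ}⟨x,x*⟩ and polynomials p_1,...,p_n ∈ R^{1×ℓ}⟨x,x*⟩ satisfy that Σ_i p_i* p_i lies in R^{ℓ×1}·I + I*·R^{1×ℓ} where I = {θ : L(θ*θ) = 0}, then each p_i ∈ I. In other words, I is a real left module. -/
/-!
The form `(q, a) ↦ L(q* a)` on `ℝ^{1×ℓ}⟨x,x*⟩` is symmetric and positive semidefinite, so by
Cauchy–Schwarz every `a` with `L(a* a) = 0` is in its radical. Hence `L` vanishes on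
`ℝ^{ℓ×1}·I + I*·ℝ^{1×ℓ}`, and if `Σ pᵢ* pᵢ` lies there, the nonnegative numbers `L(pᵢ* pᵢ)`
sum to zero, so each vanishes.
-/

open scoped BigOperators

namespace NSS

/-- Words in the `2g` free letters `x_1,…,x_g,x_1^*,…,x_g^*`
(a letter is a pair of an index and a `Bool`: `false` = unstarred, `true` = starred). -/
abbrev Word (g : ℕ) := FreeMonoid (Fin g × Bool)

/-- The free `*`-algebra `ℝ⟨x,x*⟩`. -/
abbrev NC (g : ℕ) := MonoidAlgebra ℝ (Word g)

/-- `ν × ℓ` matrices of noncommutative polynomials. -/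
abbrev NCMat (g ν ℓ : ℕ) := Matrix (Fin ν) (Fin ℓ) (NC g)

/-- The involution on words: reverse the word and swap starred/unstarred letters. -/
def wordStar {g : ℕ} (w : Word g) : Word g :=
  FreeMonoid.ofList (((FreeMonoid.toList w).map (fun p => (p.1, !p.2))).reverse)

/-- The involution on `ℝ⟨x,x*⟩`. -/
noncomputable def ncStar {g : ℕ} (p : NC g) : NC g :=
  MonoidAlgebra.ofCoeff (Finsupp.mapDomain wordStar (p.coeff : Word g →₀ ℝ))

/-- The involution on matrix polynomials: transpose and apply `ncStar` entrywise. -/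
noncomputable def matStar {g ν ℓ : ℕ} (p : NCMat g ν ℓ) : NCMat g ℓ ν :=
  Matrix.of fun i j => ncStar (p j i)

/-- The left action of a scalar polynomial on a matrix polynomial
(entrywise left multiplication, identifying `q` with `I ⊗ q`). -/
noncomputable def leftMul {g ν ℓ : ℕ} (q : NC g) (p : NCMat g ν ℓ) : NCMat g ν ℓ :=
  Matrix.of fun i j => q * p i j

/-- A constant real matrix, viewed as a matrix of noncommutative polynomials. -/
noncomputable def constMat {g m n : ℕ} (A : Matrix (Fin m) (Fin n) ℝ) : NCMat g m n :=
  A.map (algebraMap ℝ (NC g))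

/-- The space `ℝ^{ℓ×1}·I + I^*·ℝ^{1×ℓ}`. -/
noncomputable def realPart {g ℓ : ℕ} (I : Set (NCMat g 1 ℓ)) : Submodule ℝ (NCMat g ℓ ℓ) :=
  Submodule.span ℝ
    ({m | ∃ B : Matrix (Fin ℓ) (Fin 1) ℝ, ∃ a ∈ I, m = constMat B * a} ∪
     {m | ∃ B : Matrix (Fin 1) (Fin ℓ) ℝ, ∃ a ∈ I, m = matStar a * constMat B})

/-- Left `ℝ⟨x,x*⟩`-submodules of `ℝ^{1×ℓ}⟨x,x*⟩`. -/
def IsLeftSubmodule {g ℓ : ℕ} (I : Set (NCMat g 1 ℓ)) : Prop :=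
  0 ∈ I ∧ (∀ a b, a ∈ I → b ∈ I → a + b ∈ I) ∧
    (∀ (r : ℝ) a, a ∈ I → r • a ∈ I) ∧ ∀ (q : NC g) a, a ∈ I → leftMul q a ∈ I

/-- A left module `I` is *real* if any finite sum of hermitian squares lying in
`ℝ^{ℓ×1}·I + I^*·ℝ^{1×ℓ}` has all its terms in `I`. -/
def IsReal {g ℓ : ℕ} (I : Set (NCMat g 1 ℓ)) : Prop :=
  ∀ (n : ℕ) (p : Fin n → NCMat g 1 ℓ),
    (∑ i, matStar (p i) * p i) ∈ realPart I → ∀ i, p i ∈ I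

/-- The monomial `e_j ⊗ w ∈ ℝ^{1×ℓ}⟨x,x*⟩`. -/
noncomputable def rowMono {g ℓ : ℕ} (j : Fin ℓ) (w : Word g) : NCMat g 1 ℓ :=
  Matrix.of fun _ j' => if j' = j then (MonoidAlgebra.single w (1:ℝ) : NC g) else 0

/-- The left `ℝ⟨x,x*⟩`-submodule generated by a set. -/
def leftSpan {g ℓ : ℕ} (G : Set (NCMat g 1 ℓ)) : Set (NCMat g 1 ℓ) :=
  ⋂₀ {J | IsLeftSubmodule J ∧ G ⊆ J}

section Involution

lemma wordStar_mul {g : ℕ} (u v : Word g) : wordStar (u * v) = wordStar v * wordStar u := by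
  simp [wordStar, FreeMonoid.toList_mul]

lemma wordStar_wordStar {g : ℕ} (w : Word g) : wordStar (wordStar w) = w := by
  simp [wordStar, Function.comp_def]

lemma ncStar_single {g : ℕ} (w : Word g) (r : ℝ) :
    ncStar (MonoidAlgebra.single w r) = MonoidAlgebra.single (wordStar w) r := by
  simp [ncStar, Finsupp.mapDomain_single, MonoidAlgebra.coeff_single,
    MonoidAlgebra.ofCoeff_single]

lemma ncStar_add {g : ℕ} (p q : NC g) : ncStar (p + q) = ncStar p + ncStar q := by
  rw [ncStar, MonoidAlgebra.coeff_add, Finsupp.mapDomain_add, MonoidAlgebra.ofCoeff_add]; rfl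

lemma ncStar_smul {g : ℕ} (t : ℝ) (p : NC g) : ncStar (t • p) = t • ncStar p := by
  rw [ncStar, MonoidAlgebra.coeff_smul, Finsupp.mapDomain_smul, MonoidAlgebra.ofCoeff_smul]; rfl

lemma ncStar_sum {g : ℕ} {ι : Type*} (s : Finset ι) (f : ι → NC g) :
    ncStar (∑ i ∈ s, f i) = ∑ i ∈ s, ncStar (f i) :=
  map_sum (AddMonoidHom.mk' ncStar ncStar_add) f s

lemma ncStar_mul {g : ℕ} (p q : NC g) : ncStar (p * q) = ncStar q * ncStar p := by
  induction p using MonoidAlgebra.induction_linear with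
  | zero => simp [ncStar]
  | add a b ha hb => rw [add_mul, ncStar_add, ncStar_add, ha, hb, mul_add]
  | single u r =>
    induction q using MonoidAlgebra.induction_linear with
    | zero => simp [ncStar]
    | add c d hc hd => rw [mul_add, ncStar_add, ncStar_add, hc, hd, add_mul]
    | single v s =>
      rw [MonoidAlgebra.single_mul_single, ncStar_single, ncStar_single, ncStar_single,
        MonoidAlgebra.single_mul_single, wordStar_mul, mul_comm]

lemma ncStar_ncStar {g : ℕ} (p : NC g) : ncStar (ncStar p) = p := by
  have hinv : wordStar ∘ wordStar = (id : Word g → Word g) := funext wordStar_wordStar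
  rw [ncStar, ncStar, MonoidAlgebra.coeff_ofCoeff, ← Finsupp.mapDomain_comp, hinv,
    Finsupp.mapDomain_id, MonoidAlgebra.ofCoeff_coeff]

lemma ncStar_algebraMap {g : ℕ} (r : ℝ) :
    ncStar (algebraMap ℝ (NC g) r) = algebraMap ℝ (NC g) r := by
  show ncStar (MonoidAlgebra.single 1 r) = MonoidAlgebra.single 1 r
  rw [ncStar_single]; rfl

lemma matStar_add {g ν ℓ : ℕ} (A B : NCMat g ν ℓ) :
    matStar (A + B) = matStar A + matStar B := by
  ext i j; simp [matStar, ncStar_add]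

lemma matStar_smul {g ν ℓ : ℕ} (t : ℝ) (A : NCMat g ν ℓ) :
    matStar (t • A) = t • matStar A := by
  ext i j; simp [matStar, ncStar_smul]

lemma matStar_mul {g ν κ ℓ : ℕ} (A : NCMat g ν κ) (B : NCMat g κ ℓ) :
    matStar (A * B) = matStar B * matStar A := by
  ext i j
  simp only [matStar, Matrix.of_apply, Matrix.mul_apply, ncStar_sum, ncStar_mul]

lemma matStar_matStar {g ν ℓ : ℕ} (A : NCMat g ν ℓ) : matStar (matStar A) = A := by
  ext i j; simp [matStar, ncStar_ncStar]

lemma matStar_constMat {g m n : ℕ} (A : Matrix (Fin m) (Fin n) ℝ) :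
    matStar (constMat A : NCMat g m n) = constMat A.transpose :=
  Matrix.ext fun i j => ncStar_algebraMap (A j i)

end Involution

section Functional

variable {g ℓ : ℕ} (L : NCMat g ℓ ℓ →ₗ[ℝ] ℝ)

noncomputable def starForm : LinearMap.BilinForm ℝ (NCMat g 1 ℓ) :=
  LinearMap.mk₂ ℝ (fun q a => L (matStar q * a))
    (fun q q' a => by rw [matStar_add, Matrix.add_mul, map_add])
    (fun t q a => by rw [matStar_smul, Matrix.smul_mul, map_smul, smul_eq_mul])
    (fun q a a' => by rw [Matrix.mul_add, map_add])
    (fun t q a => by rw [Matrix.mul_smul, map_smul, smul_eq_mul])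

@[simp]
lemma starForm_apply (q a : NCMat g 1 ℓ) : starForm L q a = L (matStar q * a) := rfl

variable {L}

lemma starForm_comm (hsym : ∀ ω : NCMat g ℓ ℓ, L (matStar ω) = L ω) (q a : NCMat g 1 ℓ) :
    starForm L a q = starForm L q a := by
  rw [starForm_apply, starForm_apply, ← hsym, matStar_mul, matStar_matStar]

lemma starForm_eq_zero_of_self_eq_zero (hsym : ∀ ω : NCMat g ℓ ℓ, L (matStar ω) = L ω)
    (hpos : ∀ w : NCMat g 1 ℓ, 0 ≤ L (matStar w * w)) {a : NCMat g 1 ℓ}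
    (ha : L (matStar a * a) = 0) (q : NCMat g 1 ℓ) : L (matStar q * a) = 0 := by
  have hcs := (starForm L).apply_mul_apply_le_of_forall_zero_le hpos q a
  rw [starForm_comm hsym q a, starForm_apply L a a, ha, mul_zero, ← sq] at hcs
  exact pow_eq_zero_iff two_ne_zero |>.mp (le_antisymm hcs (sq_nonneg _))

lemma map_eq_zero_of_mem_realPart (hsym : ∀ ω : NCMat g ℓ ℓ, L (matStar ω) = L ω)
    {I : Set (NCMat g 1 ℓ)} (hI : ∀ a ∈ I, ∀ q, L (matStar q * a) = 0)
    {m : NCMat g ℓ ℓ} (hm : m ∈ realPart I) : L m = 0 := by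
  induction hm using Submodule.span_induction with
  | mem x hx =>
    rcases hx with ⟨B, a, ha, rfl⟩ | ⟨B, a, ha, rfl⟩
    · rw [← matStar_matStar (constMat B), matStar_constMat]
      exact hI a ha (constMat B.transpose)
    · rw [← hsym]
      -- this product in `realPart` elaborates with `CStarMatrix`'s (defeq) `HMul`, invisible to `rw`
      erw [matStar_mul]
      rw [matStar_matStar]
      exact hI a ha (constMat B)
  | zero => exact map_zero L
  | add x y _ _ hx hy => rw [map_add, hx, hy, add_zero]
  | smul t x _ hx => rw [map_smul, hx, smul_zero]

end Functional

/-- the zero set `I = {θ : L(θ*θ) = 0}` of a positive linear functional on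
`ℝ^{ℓ×ℓ}⟨x,x*⟩` is a real left module: any finite sum `Σ pᵢ*pᵢ` lying in
`ℝ^{ℓ×1}·I + I*·ℝ^{1×ℓ}` has each `pᵢ ∈ I`. -/
theorem stmt3 {g ℓ : ℕ} (L : NCMat g ℓ ℓ →ₗ[ℝ] ℝ)
    (hsym : ∀ ω : NCMat g ℓ ℓ, L (matStar ω) = L ω)
    (hpos : ∀ w : NCMat g 1 ℓ, 0 ≤ L (matStar w * w)) :
    IsReal {θ : NCMat g 1 ℓ | L (matStar θ * θ) = 0} := by
  intro n p hsum i
  have hzero : ∑ j, L (matStar (p j) * p j) = 0 := by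
    rw [← map_sum]
    exact map_eq_zero_of_mem_realPart hsym
      (fun a ha => starForm_eq_zero_of_self_eq_zero hsym hpos ha) hsum
  exact (Finset.sum_eq_zero_iff_of_nonneg fun j _ => hpos (p j)).mp hzero i (Finset.mem_univ i)

end NSS
end

section
/- A left module I ⊆ R^{1×ℓ}⟨x,x*⟩ is real if and only if whenever Σ_i p_i*p_i ∈ R^{ℓ×1}I + I*R^{1×ℓ} for finitely many matrix polynomials p_i ∈ R^{ν_i×ℓ}⟨x,x*⟩ (of possibly varying row dimensions ν_i), each p_i lies in R^{ν_i×1}·I. -/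
open scoped BigOperators

namespace NSS

/-!
Writing `e_j* p` for the rows of `p`, the identity `p*p = Σ_j (e_j* p)*(e_j* p)` turns a sum of
hermitian squares of matrix polynomials into one of row polynomials, and `p ∈ ℝ^{ν×1}·I` as soon
as every row of `p` lies in `I`, since `p = Σ_j e_j (e_j* p)`. Conversely, for `ν_i = 1` the span
`ℝ^{1×1}·I` is `I` itself.
-/

open Matrix

variable {g ℓ : ℕ}

section Rows

variable {ν : ℕ} (p : NCMat g ν ℓ)

lemma matStar_mul_self_eq_sum_rows :
    matStar p * p = ∑ j, matStar (replicateRow (Fin 1) (p j)) * replicateRow (Fin 1) (p j) := by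
  ext a b
  simp [Matrix.mul_apply, matStar, Matrix.sum_apply]

lemma eq_sum_constMat_single_mul_rows :
    p = ∑ j, constMat (single j 0 (1 : ℝ)) * replicateRow (Fin 1) (p j) := by
  refine Matrix.ext fun a b => ?_
  rw [Matrix.sum_apply, Finset.sum_eq_single a]
  · erw [Matrix.mul_apply]
    simp [constMat, Matrix.single, ← MonoidAlgebra.one_def]
  · intro j _ hj
    erw [Matrix.mul_apply]
    simp [constMat, Matrix.single, hj]
  · simp

lemma mem_span_constMat_mul_of_rows_mem {I : Set (NCMat g 1 ℓ)}
    (h : ∀ j, replicateRow (Fin 1) (p j) ∈ I) :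
    p ∈ Submodule.span ℝ {m : NCMat g ν ℓ | ∃ B : Matrix (Fin ν) (Fin 1) ℝ, ∃ a ∈ I,
      m = constMat B * a} := by
  rw [eq_sum_constMat_single_mul_rows p]
  exact Submodule.sum_mem _ fun j _ => Submodule.subset_span ⟨_, _, h j, rfl⟩

end Rows

lemma constMat_mul_eq_smul (B : Matrix (Fin 1) (Fin 1) ℝ) (a : NCMat g 1 ℓ) :
    constMat B * a = B 0 0 • a := by
  ext r c : 2
  obtain rfl : r = 0 := Subsingleton.elim r 0
  erw [Matrix.mul_apply]
  simp [constMat, Algebra.smul_def]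

def IsLeftSubmodule.toSubmodule {I : Set (NCMat g 1 ℓ)} (hI : IsLeftSubmodule I) :
    Submodule ℝ (NCMat g 1 ℓ) where
  carrier := I
  zero_mem' := hI.1
  add_mem' := hI.2.1 _ _
  smul_mem' r _ := hI.2.2.1 r _

lemma IsLeftSubmodule.mem_of_mem_span_constMat_mul {I : Set (NCMat g 1 ℓ)}
    (hI : IsLeftSubmodule I) {p : NCMat g 1 ℓ}
    (hp : p ∈ Submodule.span ℝ {m : NCMat g 1 ℓ | ∃ B : Matrix (Fin 1) (Fin 1) ℝ, ∃ a ∈ I,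
      m = constMat B * a}) : p ∈ I := by
  refine (Submodule.span_le (p := hI.toSubmodule)).2 ?_ hp
  rintro _ ⟨B, a, ha, rfl⟩
  rw [constMat_mul_eq_smul]
  exact hI.toSubmodule.smul_mem _ ha

lemma IsReal.mem_of_sum_mem {I : Set (NCMat g 1 ℓ)} (hI : IsReal I) {ι : Type*} [Fintype ι]
    (p : ι → NCMat g 1 ℓ) (hp : ∑ i, matStar (p i) * p i ∈ realPart I) (i : ι) : p i ∈ I := by
  let e := (Fintype.equivFin ι).symm
  have hpe : ∑ k, matStar (p (e k)) * p (e k) ∈ realPart I := by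
    rwa [e.sum_comp (fun i => matStar (p i) * p i)]
  simpa using hI _ (p ∘ e) hpe (e.symm i)

/-- a left module `I ⊆ ℝ^{1×ℓ}⟨x,x*⟩` is real iff whenever
`Σ pᵢ*pᵢ ∈ ℝ^{ℓ×1}I + I*ℝ^{1×ℓ}` for matrix polynomials `pᵢ ∈ ℝ^{νᵢ×ℓ}⟨x,x*⟩`,
each `pᵢ` lies in `ℝ^{νᵢ×1}·I`. -/
theorem stmt4 {g ℓ : ℕ} (I : Set (NCMat g 1 ℓ)) (hI : IsLeftSubmodule I) :
    IsReal I ↔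
      ∀ (n : ℕ) (ν : Fin n → ℕ) (p : ∀ i, NCMat g (ν i) ℓ),
        (∑ i, matStar (p i) * p i) ∈ realPart I →
          ∀ i, p i ∈ Submodule.span ℝ
            {m : NCMat g (ν i) ℓ | ∃ B : Matrix (Fin (ν i)) (Fin 1) ℝ, ∃ a ∈ I,
              m = constMat B * a} := by
  constructor
  · intro hreal n ν p hp i
    refine mem_span_constMat_mul_of_rows_mem (p i) fun j => ?_
    let rows : (Σ i, Fin (ν i)) → NCMat g 1 ℓ := fun s => replicateRow (Fin 1) (p s.1 s.2)
    have hrows : ∑ s, matStar (rows s) * rows s ∈ realPart I := by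
      simpa only [rows, Fintype.sum_sigma, ← matStar_mul_self_eq_sum_rows] using hp
    exact hreal.mem_of_sum_mem rows hrows ⟨i, j⟩
  · intro h n p hp i
    exact hI.mem_of_mem_span_constMat_mul (h n (fun _ => 1) p hp i)

end NSS
end

section
/- Let 𝔠 ⊆ R^{1×ℓ}⟨x,x*⟩ be a right chip space. A monomial m ∈ M^{1×ℓ} lies in R⟨x,x*⟩𝔠 \ 𝔠 if and only if m = w·m̄ for some word w ∈ ⟨x,x*⟩ and some monomial m̄ ∈ R⟨x,x*⟩₁𝔠 \ 𝔠 (i.e., m̄ is a product of a single letter and a monomial of 𝔠, but m̄ ∉ 𝔠); moreover this representation is unique. -/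
open scoped BigOperators

namespace NSS

/-- A set of row monomials (indexed by column and word) closed under right chips. -/
def IsRightChipClosed {g ℓ : ℕ} (S : Set (Fin ℓ × Word g)) : Prop :=
  ∀ (j : Fin ℓ) (u v : Word g), (j, u * v) ∈ S → (j, v) ∈ S

/-- The right chip space spanned by a chip-closed set of monomials. -/
noncomputable def chipSpace {g ℓ : ℕ} (S : Set (Fin ℓ × Word g)) :
    Submodule ℝ (NCMat g 1 ℓ) :=
  Submodule.span ℝ {p | ∃ m ∈ S, p = rowMono m.1 m.2}

/-- The space `ℝ⟨x,x*⟩·𝔠`. -/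
noncomputable def algSpanChip {g ℓ : ℕ} (S : Set (Fin ℓ × Word g)) :
    Submodule ℝ (NCMat g 1 ℓ) :=
  Submodule.span ℝ {p | ∃ q : NC g, ∃ c ∈ chipSpace S, p = leftMul q c}

/-- `Γ(𝔠)`: the set of columns `j` with `e_j ⊗ 1 ∈ 𝔠`. -/
def Gam {g ℓ : ℕ} (S : Set (Fin ℓ × Word g)) : Set (Fin ℓ) :=
  {j | (j, (1 : Word g)) ∈ S}

/-- The direct sum `⨁_{j ∈ Γ} e_j ⊗ ℝ⟨x,x*⟩`, i.e. row polynomials supported on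
columns in `Γ`. -/
noncomputable def colSupported {g ℓ : ℕ} (Γ : Set (Fin ℓ)) : Submodule ℝ (NCMat g 1 ℓ) where
  carrier := {p | ∀ j ∉ Γ, p 0 j = 0}
  add_mem' := by
    intro a b ha hb j hj
    simp [Matrix.add_apply, ha j hj, hb j hj]
  zero_mem' := by intro j hj; simp
  smul_mem' := by
    intro c a ha j hj
    simp [Matrix.smul_apply, ha j hj]

end NSS

/-!
Membership in a right-chip-closed set is inherited by shorter suffixes, so along the
suffixes of `u`, ordered by length, it holds up to some length and fails beyond it. If `u`
has a suffix in the set but is not in it, the factor `m̄` is the shortest suffix of `u` not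
in the set, and no other suffix can play its role.
-/

namespace FreeMonoid

variable {α : Type*}

theorem mul_eq_mul_iff {w₁ m₁ w₂ m₂ : FreeMonoid α} :
    w₁ * m₁ = w₂ * m₂ ↔
      (∃ a, w₂ = w₁ * a ∧ m₁ = a * m₂) ∨ ∃ c, w₁ = w₂ * c ∧ m₂ = c * m₁ := by
  simpa only [← toList.injective.eq_iff, toList_mul, toList.surjective.exists]
    using List.append_eq_append_iff

theorem of_mul_eq_of_mul_iff {x y : α} {v w : FreeMonoid α} :
    of x * v = of y * w ↔ x = y ∧ v = w := by
  simp only [← toList.injective.eq_iff, toList_of_mul, List.cons.injEq]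

end FreeMonoid

namespace NSS

open FreeMonoid

/-- For `T` the words `w` with `e_j ⊗ w ∈ 𝔠`, `IsBorder T m` says `e_j ⊗ m ∈ ℝ⟨x,x*⟩₁𝔠 \ 𝔠`. -/
def IsBorder {α : Type*} (T : Set (FreeMonoid α)) (m : FreeMonoid α) : Prop :=
  (∃ ξ b, m = of ξ * b ∧ b ∈ T) ∧ m ∉ T

section

variable {α : Type*} {T : Set (FreeMonoid α)}

theorem exists_mul_isBorder {a b : FreeMonoid α} (hb : b ∈ T) (hab : a * b ∉ T) :
    ∃ w m, a * b = w * m ∧ IsBorder T m := by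
  induction a using FreeMonoid.inductionOn' with
  | one => exact absurd (by rwa [one_mul]) hab
  | of_mul x a ih =>
    by_cases h : a * b ∈ T
    · exact ⟨1, of x * a * b, (one_mul _).symm, ⟨x, a * b, mul_assoc _ _ _, h⟩, hab⟩
    · obtain ⟨w, m, he, hm⟩ := ih h
      exact ⟨of x * w, m, by rw [mul_assoc, he, mul_assoc], hm⟩

theorem eq_one_of_isBorder_eq_mul (hT : ∀ u v, u * v ∈ T → v ∈ T) {a m₁ m₂ : FreeMonoid α}
    (hm₁ : IsBorder T m₁) (hm₂ : m₂ ∉ T) (h : m₁ = a * m₂) : a = 1 := by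
  cases a using FreeMonoid.casesOn with
  | one => rfl
  | of_mul x a =>
    obtain ⟨⟨ξ, b, rfl, hb⟩, -⟩ := hm₁
    rw [mul_assoc, of_mul_eq_of_mul_iff] at h
    exact absurd (hT _ _ (h.2 ▸ hb)) hm₂

theorem eq_and_eq_of_mul_isBorder (hT : ∀ u v, u * v ∈ T → v ∈ T) {w₁ m₁ w₂ m₂ : FreeMonoid α}
    (h : w₁ * m₁ = w₂ * m₂) (hm₁ : IsBorder T m₁) (hm₂ : IsBorder T m₂) : w₁ = w₂ ∧ m₁ = m₂ := by
  rcases mul_eq_mul_iff.mp h with ⟨a, rfl, rfl⟩ | ⟨c, rfl, rfl⟩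
  · simp [eq_one_of_isBorder_eq_mul hT hm₁ hm₂.2 rfl]
  · simp [eq_one_of_isBorder_eq_mul hT hm₂ hm₁.2 rfl]

theorem existsUnique_mul_isBorder_iff (hT : ∀ u v, u * v ∈ T → v ∈ T) (u : FreeMonoid α) :
    ((∃ a b, u = a * b ∧ b ∈ T) ∧ u ∉ T) ↔
      ∃! p : FreeMonoid α × FreeMonoid α, u = p.1 * p.2 ∧ IsBorder T p.2 := by
  constructor
  · rintro ⟨⟨a, b, rfl, hb⟩, hu⟩
    obtain ⟨w, m, h, hm⟩ := exists_mul_isBorder hb hu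
    refine ⟨(w, m), ⟨h, hm⟩, ?_⟩
    rintro ⟨w', m'⟩ ⟨h', hm'⟩
    obtain ⟨rfl, rfl⟩ := eq_and_eq_of_mul_isBorder hT (h'.symm.trans h) hm' hm
    rfl
  · rintro ⟨⟨w, m⟩, ⟨rfl, ⟨ξ, b, rfl, hb⟩, hm⟩, -⟩
    exact ⟨⟨w * of ξ, b, (mul_assoc _ _ _).symm, hb⟩, fun h => hm (hT _ _ h)⟩

end

/-- a monomial `e_j ⊗ u` lies in `ℝ⟨x,x*⟩𝔠 \ 𝔠` iff it can be written
uniquely as `u = w·m̄` where `m̄` is a single letter times a chip but is not itself a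
chip (`m̄ ∈ ℝ⟨x,x*⟩₁𝔠 \ 𝔠`). -/
theorem stmt12 {g ℓ : ℕ} (S : Set (Fin ℓ × Word g)) (hS : IsRightChipClosed S)
    (j : Fin ℓ) (u : Word g) :
    ((∃ a b : Word g, u = a * b ∧ (j, b) ∈ S) ∧ (j, u) ∉ S) ↔
      ∃! p : Word g × Word g,
        u = p.1 * p.2 ∧
          (∃ (ξ : Fin g × Bool) (b : Word g), p.2 = FreeMonoid.of ξ * b ∧ (j, b) ∈ S) ∧
          (j, p.2) ∉ S :=
  existsUnique_mul_isBorder_iff (T := {b | (j, b) ∈ S}) (hS j) u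

end NSS
end

section
/- In particular (corollary of the trichotomy): if a subspace B ⊆ S^k contains no nonzero positive semidefinite matrix, then its orthogonal complement B^⊥ (with respect to the trace inner product) contains a positive definite matrix. -/
/-! The trace-one positive semidefinite matrices form a compact convex set disjoint from `B`, so
Hahn–Banach separation yields a continuous functional vanishing on `B` and positive on that set.
Every functional on matrices is `X ↦ Tr(M X)`, and on symmetric matrices `M + Mᵀ` represents twice
the same functional; its positivity on the rank-one matrices `x xᵀ / (x ⬝ᵥ x)` is exactly positive
definiteness. -/

open Matrix

namespace NSS14

/-- The orthogonal complement of `B` inside the space of symmetric `k×k` real matrices,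
with respect to the trace inner product `⟨A,C⟩ = Tr(AC)`. -/
def symOrth {k : ℕ} (B : Submodule ℝ (Matrix (Fin k) (Fin k) ℝ)) :
    Set (Matrix (Fin k) (Fin k) ℝ) :=
  {A | Aᵀ = A ∧ ∀ C ∈ B, (A * C).trace = 0}

end NSS14

section Separation

variable {E : Type*} [AddCommGroup E] [Module ℝ E] [TopologicalSpace E] [IsTopologicalAddGroup E]
  [ContinuousSMul ℝ E] [LocallyConvexSpace ℝ E]

theorem Submodule.exists_strongDual_eq_zero_and_pos_of_disjoint {K : Set E} (hKconv : Convex ℝ K)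
    (hKcomp : IsCompact K) (B : Submodule ℝ E) (hB : IsClosed (B : Set E))
    (hKB : Disjoint K B) : ∃ f : StrongDual ℝ E, (∀ x ∈ B, f x = 0) ∧ ∀ x ∈ K, 0 < f x := by
  obtain ⟨f, u, v, hfB, huv, hfK⟩ :=
    geometric_hahn_banach_closed_compact B.convex hB hKconv hKcomp hKB.symm
  have hf0 : ∀ x ∈ B, f x = 0 := by
    intro x hx
    by_contra hne
    have := hfB ((u / f x) • x) (B.smul_mem _ hx)
    rw [map_smul, smul_eq_mul, div_mul_cancel₀ _ hne] at this
    exact lt_irrefl u this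
  have hu : 0 < u := by simpa using hfB 0 B.zero_mem
  exact ⟨f, hf0, fun x hx => by linarith [hfK x hx]⟩

end Separation

namespace Matrix

instance {m n 𝕜 E : Type*} [Semiring 𝕜] [PartialOrder 𝕜] [AddCommMonoid E] [Module 𝕜 E]
    [TopologicalSpace E] [LocallyConvexSpace 𝕜 E] : LocallyConvexSpace 𝕜 (Matrix m n E) :=
  Pi.locallyConvexSpace

variable {n R : Type*} [Fintype n]

theorem exists_trace_mul_eq [DecidableEq n] [CommSemiring R] (f : Matrix n n R →ₗ[R] R) :
    ∃ M : Matrix n n R, ∀ X, f X = (M * X).trace := by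
  set M : Matrix n n R := of fun i j => f (single j i 1)
  have : f = traceLinearMap n R R ∘ₗ LinearMap.mulLeft R M :=
    ext_linearMap R fun i j => LinearMap.ext_ring <| by simp [M, trace_mul_single]
  exact ⟨M, fun X => congr($this X)⟩

theorem trace_mul_add_transpose_mul [CommSemiring R] (M : Matrix n n R) {X : Matrix n n R}
    (hX : X.IsSymm) : ((M + Mᵀ) * X).trace = 2 * (M * X).trace := by
  rw [add_mul, trace_add, ← trace_transpose (Mᵀ * X), transpose_mul, transpose_transpose, hX.eq,
    trace_mul_comm X, two_mul]

theorem trace_mul_vecMulVec [CommSemiring R] (A : Matrix n n R) (x y : n → R) :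
    (A * vecMulVec x y).trace = y ⬝ᵥ A *ᵥ x := by
  simp only [trace, diag, mul_apply, vecMulVec_apply, dotProduct, mulVec, Finset.mul_sum]
  exact Finset.sum_congr rfl fun _ _ => Finset.sum_congr rfl fun _ _ => by ring

theorem isClosed_setOf_posSemidef [Ring R] [PartialOrder R] [StarRing R] [TopologicalSpace R]
    [IsTopologicalRing R] [ContinuousStar R] [OrderClosedTopology R] :
    IsClosed {X : Matrix n n R | X.PosSemidef} := by
  simp only [posSemidef_iff_dotProduct_mulVec, Set.ofPred_and, Set.ofPred_forall]
  refine IsClosed.inter (isClosed_eq continuous_id.matrix_conjTranspose continuous_id)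
    (isClosed_iInter fun x => isClosed_le continuous_const ?_)
  fun_prop

namespace PosSemidef

theorem two_mul_abs_apply_le [DecidableEq n] {X : Matrix n n ℝ} (hX : X.PosSemidef) (i j : n) :
    2 * |X i j| ≤ X i i + X j j := by
  -- test the quadratic form on `eᵢ ± eⱼ`
  have hsym : X j i = X i j := by simpa using hX.1.apply i j
  have hp := hX.dotProduct_mulVec_nonneg (Pi.single i 1 + Pi.single j 1)
  have hm := hX.dotProduct_mulVec_nonneg (Pi.single i 1 - Pi.single j 1)
  simp only [star_trivial, mulVec_add, mulVec_sub, mulVec_single, MulOpposite.op_one, one_smul,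
    dotProduct_add, add_dotProduct, dotProduct_sub, sub_dotProduct, single_dotProduct, col_apply,
    one_mul, hsym] at hp hm
  cases abs_cases (X i j) <;> linarith

theorem apply_le_trace {X : Matrix n n ℝ} (hX : X.PosSemidef) (i : n) : X i i ≤ X.trace :=
  Finset.single_le_sum (f := fun j => X j j) (fun _ _ => hX.diag_nonneg) (Finset.mem_univ i)

theorem abs_apply_le_trace {X : Matrix n n ℝ} (hX : X.PosSemidef) (i j : n) :
    |X i j| ≤ X.trace := by
  classical
  linarith [hX.two_mul_abs_apply_le i j, hX.apply_le_trace i, hX.apply_le_trace j]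

end PosSemidef

theorem isCompact_setOf_posSemidef_trace_eq_one :
    IsCompact {X : Matrix n n ℝ | X.PosSemidef ∧ X.trace = 1} := by
  have hclosed : IsClosed {X : Matrix n n ℝ | X.PosSemidef ∧ X.trace = 1} :=
    isClosed_setOf_posSemidef.inter (isClosed_eq continuous_id.matrix_trace continuous_const)
  refine (isCompact_univ_pi fun _ => isCompact_univ_pi fun _ =>
    isCompact_Icc (a := -1) (b := 1)).of_isClosed_subset hclosed ?_
  rintro X ⟨hX, htr⟩ i - j -
  exact abs_le.mp (htr ▸ hX.abs_apply_le_trace i j)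

theorem convex_setOf_posSemidef_trace_eq_one :
    Convex ℝ {X : Matrix n n ℝ | X.PosSemidef ∧ X.trace = 1} := by
  rintro X ⟨hX, hXt⟩ Y ⟨hY, hYt⟩ a b ha hb hab
  exact ⟨(hX.smul ha).add (hY.smul hb), by simp [trace_add, trace_smul, hXt, hYt, hab]⟩

theorem posDef_of_forall_trace_mul_pos {A : Matrix n n ℝ} (hA : A.IsSymm)
    (h : ∀ X : Matrix n n ℝ, X.PosSemidef → X.trace = 1 → 0 < (A * X).trace) : A.PosDef := by
  refine .of_dotProduct_mulVec_pos (isHermitian_iff_isSymm.mpr hA) fun x hx => ?_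
  have hxx : 0 < x ⬝ᵥ x := by simpa using dotProduct_self_star_pos_iff.mpr hx
  have := h ((x ⬝ᵥ x)⁻¹ • vecMulVec x x)
    ((posSemidef_vecMulVec_self_star x).smul (by positivity)) ?_
  · rw [Matrix.mul_smul, trace_smul, trace_mul_vecMulVec, smul_eq_mul] at this
    simpa using pos_of_mul_pos_right this (by positivity)
  · rw [trace_smul, trace_vecMulVec, smul_eq_mul, inv_mul_cancel₀ hxx.ne']

end Matrix

namespace NSS14

/-- if a subspace `B` of the symmetric `k×k` real matrices contains no
nonzero positive semidefinite matrix, then `B^⊥` contains a positive definite matrix. -/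
theorem stmt14 {k : ℕ} (B : Submodule ℝ (Matrix (Fin k) (Fin k) ℝ))
    (hB : ∀ A ∈ B, Aᵀ = A)
    (h : ∀ A ∈ B, A.PosSemidef → A = 0) :
    ∃ A ∈ symOrth B, A.PosDef := by
  have hKB : Disjoint {X : Matrix (Fin k) (Fin k) ℝ | X.PosSemidef ∧ X.trace = 1} B :=
    Set.disjoint_left.mpr fun X ⟨hX, htr⟩ hXB => by simp [h X hXB hX] at htr
  obtain ⟨f, hfB, hfK⟩ := B.exists_strongDual_eq_zero_and_pos_of_disjoint
    convex_setOf_posSemidef_trace_eq_one isCompact_setOf_posSemidef_trace_eq_one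
    B.closed_of_finiteDimensional hKB
  obtain ⟨M, hM⟩ := exists_trace_mul_eq (f : Matrix (Fin k) (Fin k) ℝ →ₗ[ℝ] ℝ)
  refine ⟨M + Mᵀ, ⟨isSymm_add_transpose_self M, fun C hC => ?_⟩,
    posDef_of_forall_trace_mul_pos (isSymm_add_transpose_self M) fun X hX htr => ?_⟩
  · rw [trace_mul_add_transpose_mul M (hB C hC), ← hM]
    exact mul_eq_zero_of_right 2 (hfB C hC)
  · rw [trace_mul_add_transpose_mul M (isHermitian_iff_isSymm.mp hX.1), ← hM]
    exact mul_pos two_pos (hfK X ⟨hX, htr⟩)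

end NSS14
end
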